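/- arXiv:1701.04246 — 4 statements merged into one kernel-verified Lean document; each statement's English description precedes it below -/
import Mathlib

section
/- Let A and B be Hermitian complex q×q matrices and let D := B - A. Then the matricial interval [A,B] := {X Hermitian : A ≤ X ≤ B} (with respect to the Loewner order) is nonempty if and only if D is positive semidefinite. In this case, [A,B] = {A + √D · K · √D : K Hermitian with 0 ≤ K ≤ I}. -/
open Matrix ComplexOrder

/-- The positive semidefinite square root of a positive semidefinite matrix
(removed from Mathlib; restored with its former definition). -/
noncomputable def Matrix.PosSemidef.sqrt {n : Type*} [Fintype n] [DecidableEq n] {𝕜 : Type*}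
    [RCLike 𝕜] {A : Matrix n n 𝕜} (hA : A.PosSemidef) : Matrix n n 𝕜 :=
  (hA.1.eigenvectorUnitary : Matrix n n 𝕜) *
    diagonal (fun i => ((√(hA.1.eigenvalues i) : ℝ) : 𝕜)) *
    (star hA.1.eigenvectorUnitary : Matrix n n 𝕜)

/-
Translating by `A` reduces everything to the interval `[0, D]`. Conjugation by the self-adjoint
`√D` is monotone and sends `[0, I]` into `[0, √D √D] = [0, D]`. Conversely, if `0 ≤ M ≤ D` then
`M` vanishes on `ker D`, since `x* M x ≤ x* D x`. Let `T = cfc (√·)⁻¹ D`; because `0⁻¹ = 0` it is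
the pseudo-inverse of `√D`, so `P = √D T` is the orthogonal projection onto `(ker D)ᗮ`, whence
`M = P M P = √D (T M T) √D`, and `K = T M T` satisfies `0 ≤ K ≤ T D T ≤ I`.
-/

open scoped MatrixOrder

namespace Matrix

variable {n 𝕜 : Type*} [Fintype n] [RCLike 𝕜]

lemma mulVec_eq_zero_of_nonneg_of_le {M D : Matrix n n 𝕜} (hM : 0 ≤ M) (hMD : M ≤ D)
    {x : n → 𝕜} (hx : D *ᵥ x = 0) : M *ᵥ x = 0 := by
  refine (hM.posSemidef.dotProduct_mulVec_zero_iff x).mp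
    (le_antisymm ?_ (hM.posSemidef.dotProduct_mulVec_nonneg x))
  have hDM := (le_iff.mp hMD).dotProduct_mulVec_nonneg x
  rwa [sub_mulVec, dotProduct_sub, hx, dotProduct_zero, zero_sub, neg_nonneg] at hDM

lemma mul_eq_zero_of_nonneg_of_le {M D N : Matrix n n 𝕜} (hM : 0 ≤ M) (hMD : M ≤ D)
    (hDN : D * N = 0) : M * N = 0 := by
  refine ext_iff_mulVec.mpr fun x => ?_
  rw [← mulVec_mulVec, zero_mulVec]
  exact mulVec_eq_zero_of_nonneg_of_le hM hMD (by rw [mulVec_mulVec, hDN, zero_mulVec])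

variable [DecidableEq n]

lemma continuousOn_spectrum (A : Matrix n n 𝕜) (f : ℝ → ℝ) : ContinuousOn f (spectrum ℝ A) :=
  A.finite_real_spectrum.continuousOn f

namespace PosSemidef

variable {D : Matrix n n 𝕜} (hD : D.PosSemidef)

lemma sqrt_eq_cfc : hD.sqrt = cfc Real.sqrt D := by
  rw [hD.1.cfc_eq]; rfl

lemma sqrt_mul_self : hD.sqrt * hD.sqrt = D := by
  rw [sqrt_eq_cfc, ← cfc_mul _ _ _ (D.continuousOn_spectrum _) (D.continuousOn_spectrum _)]
  conv_rhs => rw [← cfc_id' ℝ D]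
  exact cfc_congr fun x hx => Real.mul_self_sqrt (spectrum_nonneg_of_nonneg hD.nonneg hx)

lemma isSelfAdjoint_sqrt : IsSelfAdjoint hD.sqrt := by
  rw [sqrt_eq_cfc]; exact cfc_predicate _ _

lemma sqrt_mul_mul_sqrt_nonneg {K : Matrix n n 𝕜} (hK : 0 ≤ K) : 0 ≤ hD.sqrt * K * hD.sqrt :=
  hD.isSelfAdjoint_sqrt.conjugate_nonneg hK

lemma sqrt_mul_mul_sqrt_le {K : Matrix n n 𝕜} (hK : K ≤ 1) : hD.sqrt * K * hD.sqrt ≤ D := by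
  simpa [hD.sqrt_mul_self] using hD.isSelfAdjoint_sqrt.conjugate_le_conjugate hK

lemma exists_eq_sqrt_mul_mul_sqrt {M : Matrix n n 𝕜} (hM : 0 ≤ M) (hMD : M ≤ D) :
    ∃ K, 0 ≤ K ∧ K ≤ 1 ∧ M = hD.sqrt * K * hD.sqrt := by
  have hSS := hD.sqrt_mul_self
  rw [hD.sqrt_eq_cfc] at hSS ⊢
  set S := cfc Real.sqrt D
  set T := cfc (fun x : ℝ => (√x)⁻¹) D
  have hT : IsSelfAdjoint T := cfc_predicate _ _
  have hcont := D.continuousOn_spectrum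
  have hTDT : T * D * T ≤ 1 := by
    rw [← cfc_id' ℝ D, ← cfc_mul _ _ _ (hcont _) (hcont _), ← cfc_mul _ _ _ (hcont _) (hcont _)]
    refine cfc_le_one _ _ fun x hx => ?_
    have hx0 : 0 ≤ x := spectrum_nonneg_of_nonneg hD.nonneg hx
    calc (√x)⁻¹ * x * (√x)⁻¹ = x / (√x * √x) := by ring
      _ ≤ 1 := by rw [Real.mul_self_sqrt hx0]; exact div_self_le_one x
  have hST : S * T = T * S := cfc_commute_cfc _ _ _
  have hSTS : S * T * S = S := by
    rw [← cfc_mul _ _ _ (hcont _) (hcont _), ← cfc_mul _ _ _ (hcont _) (hcont _)]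
    refine cfc_congr fun x _ => ?_
    exact mul_inv_mul_cancel _
  have hMP : M * (S * T) = M := by
    have hDP : D * (1 - S * T) = 0 := by
      have hSST : S * (S * T) = S := by rw [hST, ← mul_assoc, hSTS]
      rw [← hSS, mul_sub, mul_one, mul_assoc, hSST, sub_self]
    have hMN := mul_eq_zero_of_nonneg_of_le hM hMD hDP
    rwa [mul_sub, mul_one, sub_eq_zero, eq_comm] at hMN
  have hPM : S * T * M = M := by
    have hS : IsSelfAdjoint S := cfc_predicate _ _
    simpa [hS.star_eq, hT.star_eq, (IsSelfAdjoint.of_nonneg hM).star_eq, hST] using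
      congrArg star hMP
  refine ⟨T * M * T, hT.conjugate_nonneg hM, (hT.conjugate_le_conjugate hMD).trans hTDT, ?_⟩
  calc M = S * T * M * (T * S) := by rw [hPM, ← hST, hMP]
    _ = S * (T * M * T) * S := by simp only [mul_assoc]

lemma Icc_zero_eq_image_sqrt_mul_mul_sqrt :
    Set.Icc 0 D = (fun K => hD.sqrt * K * hD.sqrt) '' Set.Icc 0 1 := by
  ext M
  constructor
  · rintro ⟨hM, hMD⟩
    obtain ⟨K, hK0, hK1, rfl⟩ := hD.exists_eq_sqrt_mul_mul_sqrt hM hMD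
    exact ⟨K, ⟨hK0, hK1⟩, rfl⟩
  · rintro ⟨K, ⟨hK0, hK1⟩, rfl⟩
    exact ⟨hD.sqrt_mul_mul_sqrt_nonneg hK0, hD.sqrt_mul_mul_sqrt_le hK1⟩

end PosSemidef
end Matrix

theorem stmt_0_general (q : ℕ) (A B : Matrix (Fin q) (Fin q) ℂ)
    (hA : A.IsHermitian) :
    ((∃ X : Matrix (Fin q) (Fin q) ℂ, X.IsHermitian ∧ (X - A).PosSemidef ∧ (B - X).PosSemidef)
      ↔ (B - A).PosSemidef) ∧
    ∀ hD : (B - A).PosSemidef,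
      {X : Matrix (Fin q) (Fin q) ℂ | X.IsHermitian ∧ (X - A).PosSemidef ∧ (B - X).PosSemidef} =
        {Y : Matrix (Fin q) (Fin q) ℂ | ∃ K : Matrix (Fin q) (Fin q) ℂ,
          K.IsHermitian ∧ K.PosSemidef ∧ (1 - K).PosSemidef ∧
          Y = A + hD.sqrt * K * hD.sqrt} := by
  refine ⟨⟨fun ⟨X, _, hXA, hBX⟩ => le_iff.mp ((le_iff.mpr hXA).trans (le_iff.mpr hBX)),
    fun hD => ⟨A, hA, by simpa using PosSemidef.zero, hD⟩⟩, fun hD => ?_⟩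
  ext X
  have hX := Set.ext_iff.mp hD.Icc_zero_eq_image_sqrt_mul_mul_sqrt (X - A)
  simp only [Set.mem_Icc, Set.mem_image, le_iff, sub_sub_sub_cancel_right, sub_zero] at hX
  constructor
  · rintro ⟨-, hXA, hBX⟩
    obtain ⟨K, ⟨hK0, hK1⟩, hKX⟩ := hX.mp ⟨hXA, hBX⟩
    exact ⟨K, hK0.1, hK0, hK1, by rw [hKX, add_sub_cancel]⟩
  · rintro ⟨K, -, hK0, hK1, rfl⟩
    have hXA := hX.mpr ⟨K, ⟨hK0, hK1⟩, (add_sub_cancel_left A _).symm⟩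
    exact ⟨by simpa using hA.add hXA.1.1, hXA⟩

/-- The matricial interval `[A,B]` (Loewner order) is nonempty iff `D = B - A`
is positive semidefinite, in which case `[A,B] = {A + √D K √D : 0 ≤ K ≤ I}`. -/
theorem stmt_0 (q : ℕ) (A B : Matrix (Fin q) (Fin q) ℂ)
    (hA : A.IsHermitian) (hB : B.IsHermitian) :
    ((∃ X : Matrix (Fin q) (Fin q) ℂ, X.IsHermitian ∧ (X - A).PosSemidef ∧ (B - X).PosSemidef)
      ↔ (B - A).PosSemidef) ∧
    ∀ hD : (B - A).PosSemidef,
      {X : Matrix (Fin q) (Fin q) ℂ | X.IsHermitian ∧ (X - A).PosSemidef ∧ (B - X).PosSemidef} =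
        {Y : Matrix (Fin q) (Fin q) ℂ | ∃ K : Matrix (Fin q) (Fin q) ℂ,
          K.IsHermitian ∧ K.PosSemidef ∧ (1 - K).PosSemidef ∧
          Y = A + hD.sqrt * K * hD.sqrt} :=
  stmt_0_general q A B hA
end

section
/- If A and B are positive semidefinite complex q×q matrices, then the parallel sum A : B := A(A+B)^†B is positive semidefinite, where (A+B)^† denotes the Moore-Penrose inverse of A+B. -/
/-!
Write `S = A + B`. Since `A` and `B` are positive semidefinite, `ker S ⊆ ker A`, so
`A S† S = A` and hence `A S† B = A - A S† A`. With `P = S† A` this equals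
`(1 - P)ᴴ A (1 - P) + Pᴴ B P`, a sum of congruences of positive semidefinite matrices.
For Hermitian `S` the Moore-Penrose inverse is `x ↦ x⁻¹` applied through the functional
calculus (with `0⁻¹ = 0`), which makes `S†` Hermitian.
-/

open Matrix ComplexOrder
open scoped Classical

/-- Moore-Penrose inverse of a complex matrix. -/
noncomputable def mp {m n : Type*} [Fintype m] [Fintype n] (A : Matrix m n ℂ) : Matrix n m ℂ :=
  if h : ∃ X : Matrix n m ℂ,
      A * X * A = A ∧ X * A * X = X ∧ (A * X)ᴴ = A * X ∧ (X * A)ᴴ = X * A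
  then h.choose else 0

namespace Matrix

section MoorePenrose

variable {m n α : Type*} [Fintype m] [Fintype n] [CommRing α] [StarRing α]

def IsMoorePenroseInverse (A : Matrix m n α) (X : Matrix n m α) : Prop :=
  A * X * A = A ∧ X * A * X = X ∧ (A * X)ᴴ = A * X ∧ (X * A)ᴴ = X * A

theorem IsMoorePenroseInverse.unique {A : Matrix m n α} {X Y : Matrix n m α}
    (hX : IsMoorePenroseInverse A X) (hY : IsMoorePenroseInverse A Y) : X = Y := by
  obtain ⟨hAXA, hXAX, hAX, hXA⟩ := hX
  obtain ⟨hAYA, hYAY, hAY, hYA⟩ := hY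
  have hAX_eq : A * X = A * Y :=
    calc A * X = (A * Y * A * X)ᴴ := by rw [hAYA, hAX]
      _ = (A * X)ᴴ * (A * Y)ᴴ := by simp only [conjTranspose_mul, Matrix.mul_assoc]
      _ = A * Y := by rw [hAX, hAY, ← Matrix.mul_assoc, hAXA]
  have hXA_eq : X * A = Y * A :=
    calc X * A = (X * (A * Y * A))ᴴ := by rw [hAYA, hXA]
      _ = (Y * A)ᴴ * (X * A)ᴴ := by simp only [conjTranspose_mul, Matrix.mul_assoc]
      _ = Y * A := by rw [hXA, hYA, Matrix.mul_assoc Y, ← Matrix.mul_assoc A, hAXA]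
  calc X = X * A * X := hXAX.symm
    _ = Y * A * Y := by rw [hXA_eq, Matrix.mul_assoc, hAX_eq, ← Matrix.mul_assoc]
    _ = Y := hYAY

end MoorePenrose

variable {n 𝕜 : Type*} [Fintype n] [RCLike 𝕜]

theorem IsHermitian.isMoorePenroseInverse_cfc_inv [DecidableEq n] {S : Matrix n n 𝕜}
    (hS : S.IsHermitian) : IsMoorePenroseInverse S (cfc (·⁻¹ : ℝ → ℝ) S) := by
  have hmul (f g : ℝ → ℝ) : cfc f S * cfc g S = cfc (fun x => f x * g x) S :=
    (cfc_mul f g S (S.finite_real_spectrum.continuousOn f)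
      (S.finite_real_spectrum.continuousOn g)).symm
  have hid : cfc (fun x : ℝ => x) S = S := cfc_id' ℝ S hS
  have hself (f : ℝ → ℝ) : (cfc f S)ᴴ = cfc f S := (cfc_predicate f S).star_eq
  refine ⟨?_, ?_, ?_, ?_⟩
  · calc S * cfc (·⁻¹) S * S = cfc (fun x : ℝ => x * x⁻¹ * x) S := by rw [← hmul, ← hmul, hid]
      _ = S := by simp only [mul_inv_mul_cancel, hid]
  · calc cfc (·⁻¹) S * S * cfc (·⁻¹) S = cfc (fun x : ℝ => x⁻¹ * x * x⁻¹) S := by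
          rw [← hmul, ← hmul, hid]
      _ = cfc (·⁻¹) S := cfc_congr fun x _ => by simpa using mul_inv_mul_cancel x⁻¹
  · rw [show S * cfc (·⁻¹) S = cfc (fun x : ℝ => x * x⁻¹) S by rw [← hmul, hid], hself]
  · rw [show cfc (·⁻¹) S * S = cfc (fun x : ℝ => x⁻¹ * x) S by rw [← hmul, hid], hself]

namespace PosSemidef

variable {A B : Matrix n n 𝕜}

theorem mulVec_eq_zero_of_add_mulVec_eq_zero (hA : A.PosSemidef) (hB : B.PosSemidef)
    {v : n → 𝕜} (h : (A + B) *ᵥ v = 0) : A *ᵥ v = 0 := by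
  rw [← hA.dotProduct_mulVec_zero_iff]
  have hsum : star v ⬝ᵥ A *ᵥ v + star v ⬝ᵥ B *ᵥ v = 0 := by
    rw [← dotProduct_add, ← add_mulVec, h, dotProduct_zero]
  exact ((add_eq_zero_iff_of_nonneg (hA.dotProduct_mulVec_nonneg v)
    (hB.dotProduct_mulVec_nonneg v)).mp hsum).1

theorem mul_eq_zero_of_add_mul_eq_zero {m : Type*} [Fintype m] (hA : A.PosSemidef)
    (hB : B.PosSemidef) {Q : Matrix n m 𝕜} (h : (A + B) * Q = 0) : A * Q = 0 := by
  refine ext_iff_mulVec.mpr fun v => ?_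
  rw [← mulVec_mulVec, zero_mulVec]
  exact hA.mulVec_eq_zero_of_add_mulVec_eq_zero hB (by rw [mulVec_mulVec, h, zero_mulVec])

theorem mul_mul_add_eq_self (hA : A.PosSemidef) (hB : B.PosSemidef) {X : Matrix n n 𝕜}
    (hX : (A + B) * X * (A + B) = A + B) : A * X * (A + B) = A := by
  have hker : (A + B) * (1 - X * (A + B)) = 0 := by
    rw [Matrix.mul_sub, Matrix.mul_one, ← Matrix.mul_assoc, hX, sub_self]
  have := hA.mul_eq_zero_of_add_mul_eq_zero hB hker
  rwa [Matrix.mul_sub, Matrix.mul_one, ← Matrix.mul_assoc, sub_eq_zero, eq_comm] at this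

theorem mul_mul_of_isMoorePenroseInverse (hA : A.PosSemidef) (hB : B.PosSemidef)
    {X : Matrix n n 𝕜} (hX : IsMoorePenroseInverse (A + B) X) (hXh : X.IsHermitian) :
    (A * X * B).PosSemidef := by
  obtain ⟨hSXS, hXSX, -, -⟩ := hX
  have hAXB : A * X * B = A - A * X * A :=
    eq_sub_of_add_eq' <| by rw [← Matrix.mul_add, hA.mul_mul_add_eq_self hB hSXS]
  have hXBX : X * B * X = X - X * A * X :=
    eq_sub_of_add_eq' <| by rw [← Matrix.add_mul, ← Matrix.mul_add, hXSX]
  have hsplit : A * X * B = (1 - X * A)ᴴ * A * (1 - X * A) + (X * A)ᴴ * B * (X * A) := by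
    rw [conjTranspose_sub, conjTranspose_one, conjTranspose_mul, hA.isHermitian.eq, hXh.eq]
    calc A * X * B = (1 - A * X) * A * (1 - X * A) + A * (X - X * A * X) * A := by
          rw [hAXB]; noncomm_ring
      _ = (1 - A * X) * A * (1 - X * A) + A * X * B * (X * A) := by
          rw [← hXBX]; simp only [Matrix.mul_assoc]
  rw [hsplit]
  exact (hA.conjTranspose_mul_mul_same _).add (hB.conjTranspose_mul_mul_same _)

end PosSemidef

end Matrix

theorem mp_eq_of_isMoorePenroseInverse {m n : Type*} [Fintype m] [Fintype n]
    {A : Matrix m n ℂ} {X : Matrix n m ℂ} (hX : A.IsMoorePenroseInverse X) : mp A = X := by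
  rw [mp, dif_pos ⟨X, hX⟩]
  exact Exists.choose_spec (p := A.IsMoorePenroseInverse) _ |>.unique hX

/-- the parallel sum `A : B = A (A+B)† B` of positive semidefinite matrices is
positive semidefinite. -/
theorem stmt_2 (q : ℕ) (A B : Matrix (Fin q) (Fin q) ℂ)
    (hA : A.PosSemidef) (hB : B.PosSemidef) :
    (A * mp (A + B) * B).PosSemidef := by
  have hX := (hA.add hB).isHermitian.isMoorePenroseInverse_cfc_inv
  rw [mp_eq_of_isMoorePenroseInverse hX]
  exact hA.mul_mul_of_isMoorePenroseInverse hB hX (cfc_predicate _ _)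
end

section
/- Let M be a complex (p+q)×(p+q) matrix with block representation M = [[A, B], [C, D]] where A is p×p. Then M is positive semidefinite if and only if: A and D - C A^† B are both positive semidefinite, the column space of B is contained in the column space of A, and C = B*. -/
open Matrix ComplexOrder
open scoped Classical

/-!
The Schur complement argument works with any generalized inverse `X` of `A` (`A X A = A`). If
moreover `A X B = B`, conjugating by the unipotent `N = [[1, X B], [0, 1]]` gives
`[[A, B], [Bᴴ, D]] = Nᴴ * diag(A, D - Bᴴ X B) * N`, so positivity passes both ways between the
block matrix and the two diagonal blocks. The condition `A X B = B` is the range inclusion, and it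
is forced by positivity: writing `M = Lᴴ L` with `L = [L₁ L₂]` gives `A = L₁ᴴ L₁` and `B = L₁ᴴ L₂`,
and `(1 - A X) A = 0` then implies `(1 - A X) L₁ᴴ = 0`.
-/

namespace Matrix

variable {𝕜 m n : Type*} [RCLike 𝕜] [Fintype m] [Fintype n]

/-- Since `0⁻¹ = 0`, the functional calculus of `x ↦ x⁻¹` is the Moore-Penrose inverse. -/
theorem IsHermitian.exists_penrose_inverse {A : Matrix n n 𝕜} (hA : A.IsHermitian) :
    ∃ X : Matrix n n 𝕜,
      A * X * A = A ∧ X * A * X = X ∧ (A * X)ᴴ = A * X ∧ (X * A)ᴴ = X * A := by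
  have hmul (f g : ℝ → ℝ) : cfc (fun x => f x * g x) A = cfc f A * cfc g A :=
    cfc_mul f g A (A.finite_real_spectrum.continuousOn f) (A.finite_real_spectrum.continuousOn g)
  have hid : cfc (fun x : ℝ => x) A = A := cfc_id' ℝ A hA
  refine ⟨cfc (Inv.inv : ℝ → ℝ) A, ?_, ?_, ?_, ?_⟩
  · simpa only [hmul, hid] using congrArg (cfc · A) (funext (mul_inv_mul_cancel (G₀ := ℝ)))
  · simpa only [hmul, hid, inv_inv] using
      congrArg (cfc · A) (funext fun x : ℝ => mul_inv_mul_cancel x⁻¹)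
  · simpa only [hmul, hid, star_eq_conjTranspose] using
      (cfc_predicate (fun x : ℝ => x * x⁻¹) A).star_eq
  · simpa only [hmul, hid, star_eq_conjTranspose] using
      (cfc_predicate (fun x : ℝ => x⁻¹ * x) A).star_eq

theorem range_mulVecLin_le_iff_mul_mul_eq {R k : Type*} [CommSemiring R] [Fintype k]
    {A : Matrix m n R} {X : Matrix n m R} (hX : A * X * A = A) (B : Matrix m k R) :
    LinearMap.range B.mulVecLin ≤ LinearMap.range A.mulVecLin ↔ A * X * B = B := by
  refine ⟨fun h => ext_of_mulVec_single fun j => ?_, fun h => ?_⟩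
  · obtain ⟨w, hw⟩ := h ⟨Pi.single j 1, rfl⟩
    change A *ᵥ w = B *ᵥ Pi.single j 1 at hw
    rw [← mulVec_mulVec, ← hw, mulVec_mulVec, hX]
  · rw [← h, Matrix.mul_assoc, mulVecLin_mul]
    exact LinearMap.range_comp_le_range _ _

theorem PosSemidef.exists_eq_conjTranspose_mul_self {M : Matrix n n 𝕜} (hM : M.PosSemidef) :
    ∃ L : Matrix n n 𝕜, M = Lᴴ * L := by
  open scoped MatrixOrder Matrix.Norms.L2Operator in
  exact CStarAlgebra.nonneg_iff_eq_star_mul_self.mp hM.nonneg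

theorem posSemidef_fromBlocks_zero_iff {A : Matrix m m 𝕜} {D : Matrix n n 𝕜} :
    (fromBlocks A 0 0 D).PosSemidef ↔ A.PosSemidef ∧ D.PosSemidef := by
  refine ⟨fun h => ⟨h.submatrix Sum.inl, h.submatrix Sum.inr⟩, ?_⟩
  rintro ⟨hA, hD⟩
  obtain ⟨L, rfl⟩ := hA.exists_eq_conjTranspose_mul_self
  obtain ⟨K, rfl⟩ := hD.exists_eq_conjTranspose_mul_self
  convert posSemidef_conjTranspose_mul_self (fromBlocks L 0 0 K) using 1
  simp [fromBlocks_conjTranspose, fromBlocks_multiply]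

theorem mul_mul_eq_of_posSemidef_fromBlocks {A X : Matrix m m 𝕜} (hX : A * X * A = A)
    {B : Matrix m n 𝕜} {C : Matrix n m 𝕜} {D : Matrix n n 𝕜}
    (hM : (fromBlocks A B C D).PosSemidef) : A * X * B = B := by
  obtain ⟨L, hL⟩ := hM.exists_eq_conjTranspose_mul_self
  rw [← fromCols_toCols L, conjTranspose_fromCols_eq_fromRows_conjTranspose,
    fromRows_mul_fromCols] at hL
  obtain ⟨rfl, rfl, -, -⟩ := fromBlocks_inj.mp hL
  have h : (1 - L.toCols₁ᴴ * L.toCols₁ * X) * L.toCols₁ᴴ = 0 :=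
    (mul_conjTranspose_mul_self_eq_zero _ _).mp
      (by rw [Matrix.sub_mul, Matrix.one_mul, hX, sub_self])
  rw [Matrix.sub_mul, Matrix.one_mul, sub_eq_zero] at h
  rw [← Matrix.mul_assoc, ← h]

theorem fromBlocks_eq_conjTranspose_mul_fromBlocks_zero_mul {A X : Matrix m m 𝕜}
    (hA : A.IsHermitian) {B : Matrix m n 𝕜} (hB : A * X * B = B) (D : Matrix n n 𝕜) :
    fromBlocks A B Bᴴ D = (fromBlocks 1 (X * B) 0 1)ᴴ * fromBlocks A 0 0 (D - Bᴴ * X * B) *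
      fromBlocks 1 (X * B) 0 1 := by
  have hB' : Bᴴ * Xᴴ * A = Bᴴ := by
    simpa [Matrix.mul_assoc, hA.eq] using congrArg conjTranspose hB
  simp only [fromBlocks_conjTranspose, fromBlocks_multiply]
  simp [← Matrix.mul_assoc, hB, hB']

theorem posSemidef_fromBlocks_iff_of_mul_mul_eq {A X : Matrix m m 𝕜}
    (hA : A.IsHermitian) {B : Matrix m n 𝕜} (hB : A * X * B = B) (D : Matrix n n 𝕜) :
    (fromBlocks A B Bᴴ D).PosSemidef ↔ A.PosSemidef ∧ (D - Bᴴ * X * B).PosSemidef := by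
  have hN : IsUnit (fromBlocks 1 (X * B) 0 1 : Matrix (m ⊕ n) (m ⊕ n) 𝕜) := by
    simp [isUnit_iff_isUnit_det]
  rw [fromBlocks_eq_conjTranspose_mul_fromBlocks_zero_mul hA hB, ← star_eq_conjTranspose,
    hN.posSemidef_star_left_conjugate_iff, posSemidef_fromBlocks_zero_iff]

theorem posSemidef_fromBlocks_iff {A X : Matrix m m 𝕜} (hX : A * X * A = A)
    (B : Matrix m n 𝕜) (C : Matrix n m 𝕜) (D : Matrix n n 𝕜) :
    (fromBlocks A B C D).PosSemidef ↔
      A.PosSemidef ∧ (D - C * X * B).PosSemidef ∧ A * X * B = B ∧ C = Bᴴ := by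
  constructor
  · intro hM
    have hA : A.PosSemidef := hM.submatrix Sum.inl
    have hB := mul_mul_eq_of_posSemidef_fromBlocks hX hM
    obtain rfl : C = Bᴴ := (isHermitian_fromBlocks_iff.mp hM.isHermitian).2.1.symm
    exact ⟨hA, ((posSemidef_fromBlocks_iff_of_mul_mul_eq hA.isHermitian hB D).mp hM).2, hB, rfl⟩
  · rintro ⟨hA, hS, hB, rfl⟩
    exact (posSemidef_fromBlocks_iff_of_mul_mul_eq hA.isHermitian hB D).mpr ⟨hA, hS⟩

theorem IsHermitian.mul_mp_mul_self {A : Matrix n n ℂ} (hA : A.IsHermitian) :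
    A * mp A * A = A := by
  have h := hA.exists_penrose_inverse
  rw [mp, dif_pos h]
  exact h.choose_spec.1

end Matrix

/-- the block matrix `[[A, B], [C, D]]` is positive semidefinite iff `A` and the
Schur complement `D - C A† B` are positive semidefinite, `ran B ⊆ ran A`, and `C = B*`. -/
theorem stmt_8 (p q : ℕ) (A : Matrix (Fin p) (Fin p) ℂ) (B : Matrix (Fin p) (Fin q) ℂ)
    (C : Matrix (Fin q) (Fin p) ℂ) (D : Matrix (Fin q) (Fin q) ℂ) :
    (Matrix.fromBlocks A B C D).PosSemidef ↔
      A.PosSemidef ∧ (D - C * mp A * B).PosSemidef ∧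
        LinearMap.range B.mulVecLin ≤ LinearMap.range A.mulVecLin ∧ C = Bᴴ := by
  by_cases hA : A.IsHermitian
  · rw [posSemidef_fromBlocks_iff hA.mul_mp_mul_self,
      range_mulVecLin_le_iff_mul_mul_eq hA.mul_mp_mul_self]
  · exact iff_of_false (fun hM => hA (hM.submatrix Sum.inl).isHermitian)
      (fun h => hA h.1.isHermitian)
end

section
/- Let n ≥ 0, let s_0, ..., s_{2n+2} be complex p×q matrices, and let α, β ∈ ℂ. Let H_m := (s_{j+k})_{j,k=0}^m denote block Hankel matrices, and define the transformed Hankel matrices H^{(a)}_n := (-α s_{j+k} + s_{j+k+1})_{j,k=0}^n, H^{(b)}_n := (β s_{j+k} - s_{j+k+1})_{j,k=0}^n, H^{(c)}_n := (-αβ s_{j+k} + (α+β) s_{j+k+1} - s_{j+k+2})_{j,k=0}^n. Let Δ := [I_{(n+1)q}; 0] and ∇ := [0; I_{(n+1)q}] be the (n+2)q × (n+1)q block injection matrices. Then (β-α) H^{(a)}_n = (∇ - ᾱΔ)* H_{n+1} (∇ - αΔ) + H^{(c)}_n and (β-α) H^{(b)}_n = (β̄Δ - ∇)* H_{n+1}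 (βΔ - ∇) + H^{(c)}_n. -/
open Matrix

/-!
`Δ` and `∇` are the columns of the identity indexed by block rows `0, …, n` and `1, …, n+1`, so
each of `ΔᴴH_{n+1}Δ`, `ΔᴴH_{n+1}∇`, `∇ᴴH_{n+1}Δ`, `∇ᴴH_{n+1}∇` is the block Hankel matrix of a shift
of `s`. Expanding the sandwiches bilinearly and using that `hankelBlk` is linear in the sequence,
both identities reduce to identities between linear combinations of `s_j, s_{j+1}, s_{j+2}`.
-/

/-- Block Hankel matrix `(t_{j+k})_{j,k=0}^{m-1}` built from a sequence of `p×q` matrices,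
with `m` block rows and columns. -/
def hankelBlk (p q m : ℕ) (t : ℕ → Matrix (Fin p) (Fin q) ℂ) :
    Matrix (Fin m × Fin p) (Fin m × Fin q) ℂ :=
  Matrix.of fun ja kb => t ((ja.1 : ℕ) + (kb.1 : ℕ)) ja.2 kb.2

/-- The block injection `Δ_{p,m} = [I_{mp}; 0_{p×mp}]`, of size `(m+1)p × mp`. -/
def deltaBlk (p m : ℕ) : Matrix (Fin (m + 1) × Fin p) (Fin m × Fin p) ℂ :=
  Matrix.of fun ja kb => if (ja.1 : ℕ) = (kb.1 : ℕ) ∧ ja.2 = kb.2 then 1 else 0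

/-- The block injection `∇_{p,m} = [0_{p×mp}; I_{mp}]`, of size `(m+1)p × mp`. -/
def nablaBlk (p m : ℕ) : Matrix (Fin (m + 1) × Fin p) (Fin m × Fin p) ℂ :=
  Matrix.of fun ja kb => if (ja.1 : ℕ) = (kb.1 : ℕ) + 1 ∧ ja.2 = kb.2 then 1 else 0

namespace Matrix

variable {l m n o α : Type*}

theorem conjTranspose_one_submatrix_mul_mul_one_submatrix [Fintype m] [Fintype n]
    [DecidableEq m] [DecidableEq n] [Semiring α] [StarRing α]
    (e : l → m) (f : o → n) (M : Matrix m n α) :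
    ((1 : Matrix m m α).submatrix id e)ᴴ * M * (1 : Matrix n n α).submatrix id f =
      M.submatrix e f := by
  rw [conjTranspose_submatrix, conjTranspose_one]
  calc (1 : Matrix m m α).submatrix e id * M * (1 : Matrix n n α).submatrix id f
      = M.submatrix e id * (1 : Matrix n n α).submatrix id f := by
        simpa using congrArg (· * (1 : Matrix n n α).submatrix id f)
          (one_submatrix_mul e (Equiv.refl m) M)
    _ = M.submatrix e f := by simpa using mul_submatrix_one (Equiv.refl n) f (M.submatrix e id)

end Matrix

theorem deltaBlk_eq_one_submatrix (p m : ℕ) :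
    deltaBlk p m =
      (1 : Matrix (Fin (m + 1) × Fin p) _ ℂ).submatrix id (Prod.map Fin.castSucc id) := by
  ext ⟨j, a⟩ ⟨k, b⟩
  simp [deltaBlk, one_apply, Prod.ext_iff, Fin.ext_iff]

theorem nablaBlk_eq_one_submatrix (p m : ℕ) :
    nablaBlk p m = (1 : Matrix (Fin (m + 1) × Fin p) _ ℂ).submatrix id (Prod.map Fin.succ id) := by
  ext ⟨j, a⟩ ⟨k, b⟩
  simp [nablaBlk, one_apply, Prod.ext_iff, Fin.ext_iff]

section hankelBlk

variable {p q : ℕ}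

theorem hankelBlk_submatrix {m m' : ℕ} (s : ℕ → Matrix (Fin p) (Fin q) ℂ) (a b : ℕ)
    (e f : Fin m → Fin m') (he : ∀ j, (e j : ℕ) = j + a) (hf : ∀ k, (f k : ℕ) = k + b) :
    (hankelBlk p q m' s).submatrix (Prod.map e id) (Prod.map f id) =
      hankelBlk p q m (fun j => s (j + a + b)) := by
  ext ⟨j, x⟩ ⟨k, y⟩
  simp only [hankelBlk, submatrix_apply, of_apply, Prod.map_fst, Prod.map_snd, id, he, hf]
  ring_nf

theorem hankelBlk_add (m : ℕ) (s t : ℕ → Matrix (Fin p) (Fin q) ℂ) :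
    hankelBlk p q m (s + t) = hankelBlk p q m s + hankelBlk p q m t := rfl

theorem hankelBlk_sub (m : ℕ) (s t : ℕ → Matrix (Fin p) (Fin q) ℂ) :
    hankelBlk p q m (s - t) = hankelBlk p q m s - hankelBlk p q m t := rfl

theorem hankelBlk_smul (m : ℕ) (c : ℂ) (s : ℕ → Matrix (Fin p) (Fin q) ℂ) :
    hankelBlk p q m (c • s) = c • hankelBlk p q m s := rfl

theorem nablaBlk_sub_deltaBlk_sandwich_hankelBlk (m : ℕ) (c d : ℂ)
    (s : ℕ → Matrix (Fin p) (Fin q) ℂ) :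
    (nablaBlk p m - starRingEnd ℂ c • deltaBlk p m)ᴴ * hankelBlk p q (m + 1) s *
        (nablaBlk q m - d • deltaBlk q m) =
      hankelBlk p q m (fun j => (c * d) • s j - c • s (j + 1) - d • s (j + 1) + s (j + 2)) := by
  simp only [conjTranspose_sub, conjTranspose_smul, Complex.star_def, Complex.conj_conj,
    Matrix.sub_mul, Matrix.mul_sub, Matrix.smul_mul, Matrix.mul_smul]
  simp only [nablaBlk_eq_one_submatrix, deltaBlk_eq_one_submatrix,
    conjTranspose_one_submatrix_mul_mul_one_submatrix]
  rw [hankelBlk_submatrix s 1 1 Fin.succ Fin.succ (fun _ => rfl) (fun _ => rfl),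
    hankelBlk_submatrix s 1 0 Fin.succ Fin.castSucc (fun _ => rfl) (fun _ => rfl),
    hankelBlk_submatrix s 0 1 Fin.castSucc Fin.succ (fun _ => rfl) (fun _ => rfl),
    hankelBlk_submatrix s 0 0 Fin.castSucc Fin.castSucc (fun _ => rfl) (fun _ => rfl)]
  simp only [← hankelBlk_smul, ← hankelBlk_sub]
  congr 1
  funext j
  simp only [Pi.sub_apply, Pi.smul_apply]
  module

theorem deltaBlk_sub_nablaBlk_sandwich_hankelBlk (m : ℕ) (c d : ℂ)
    (s : ℕ → Matrix (Fin p) (Fin q) ℂ) :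
    (starRingEnd ℂ c • deltaBlk p m - nablaBlk p m)ᴴ * hankelBlk p q (m + 1) s *
        (d • deltaBlk q m - nablaBlk q m) =
      hankelBlk p q m (fun j => (c * d) • s j - c • s (j + 1) - d • s (j + 1) + s (j + 2)) := by
  rw [← neg_sub, ← neg_sub (nablaBlk q m), conjTranspose_neg, Matrix.neg_mul, Matrix.neg_mul,
    Matrix.mul_neg, neg_neg, nablaBlk_sub_deltaBlk_sandwich_hankelBlk]

end hankelBlk

/-- `(β-α) H^{(a)}_n = (∇ - ᾱΔ)* H_{n+1} (∇ - αΔ) + H^{(c)}_n` and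
`(β-α) H^{(b)}_n = (β̄Δ - ∇)* H_{n+1} (βΔ - ∇) + H^{(c)}_n`. -/
theorem stmt_11 (p q n : ℕ) (α β : ℂ) (s : ℕ → Matrix (Fin p) (Fin q) ℂ) :
    (β - α) • hankelBlk p q (n + 1) (fun j => -α • s j + s (j + 1)) =
        (nablaBlk p (n + 1) - (starRingEnd ℂ α) • deltaBlk p (n + 1))ᴴ *
            hankelBlk p q (n + 2) s *
            (nablaBlk q (n + 1) - α • deltaBlk q (n + 1)) +
          hankelBlk p q (n + 1) (fun j => -(α * β) • s j + (α + β) • s (j + 1) - s (j + 2)) ∧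
      (β - α) • hankelBlk p q (n + 1) (fun j => β • s j - s (j + 1)) =
        ((starRingEnd ℂ β) • deltaBlk p (n + 1) - nablaBlk p (n + 1))ᴴ *
            hankelBlk p q (n + 2) s *
            (β • deltaBlk q (n + 1) - nablaBlk q (n + 1)) +
          hankelBlk p q (n + 1) (fun j => -(α * β) • s j + (α + β) • s (j + 1) - s (j + 2)) := by
  rw [nablaBlk_sub_deltaBlk_sandwich_hankelBlk, deltaBlk_sub_nablaBlk_sandwich_hankelBlk,
    ← hankelBlk_smul, ← hankelBlk_smul, ← hankelBlk_add, ← hankelBlk_add]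
  constructor <;>
  · congr 1
    funext j
    simp only [Pi.add_apply, Pi.smul_apply]
    module
end
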